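/- Let p be a prime and F ⊆ ℤ_p any subset. Then the counting dimension of the projection of the p-adic closure of F satisfies D(Π_p(𝓕_p(F))) ≤ BD(F), where BD(F) is the upper box-counting dimension of F. In particular, D(E) ≤ BD(E) for every E ⊆ ℤ (viewing E as a subset of ℤ_p). -/
import Mathlib


open MeasureTheory Filter Set Metric
open scoped ENNReal NNReal

noncomputable section

/-- Number of elements of `E` in the integer interval `(M, M+n]`. -/
def cnt (E : Set ℤ) (M : ℤ) (n : ℕ) : ℕ := (E ∩ Set.Ioc M (M + n)).ncard

/-- The `s`-counting measure `ℋ_s(E) = limsup_{|I|→∞} |E ∩ I| / |I|^s`,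
where `I` ranges over integer intervals `(M, N]`. -/
def countingMeasure (s : ℝ) (E : Set ℤ) : ℝ≥0∞ :=
  Filter.atTop.limsup fun n : ℕ => ⨆ M : ℤ, (cnt E M n : ℝ≥0∞) / (n : ℝ≥0∞) ^ s

/-- The upper Banach density `d*(E) = limsup_{|I|→∞} |E ∩ I| / |I|`. -/
def upperBanachDensity (E : Set ℤ) : ℝ≥0∞ := countingMeasure 1 E

variable (p : ℕ) [Fact p.Prime]

instance : MeasurableSpace ℤ_[p] := borel ℤ_[p]
instance : BorelSpace ℤ_[p] := ⟨rfl⟩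

/-- Projection `Π_p(F) = F ∩ ℤ` of a set `F ⊆ ℤ_p`, as a set of integers. -/
def proj (F : Set ℤ_[p]) : Set ℤ := {m : ℤ | (m : ℤ_[p]) ∈ F}

/-- The closed ball of radius `p^{-n}` around `x` in `ℤ_p`. -/
def pball (x : ℤ_[p]) (n : ℕ) : Set ℤ_[p] := Metric.closedBall x ((p : ℝ) ^ (-(n : ℤ)))

/-- `limsup_{|I|→∞} |A ∩ B ∩ I| / |B ∩ I|^s` for sets of integers `A, B`. -/
def relCount (s : ℝ) (A B : Set ℤ) : ℝ≥0∞ :=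
  Filter.atTop.limsup fun n : ℕ => ⨆ M : ℤ, (cnt (A ∩ B) M n : ℝ≥0∞) / (cnt B M n : ℝ≥0∞) ^ s

/-- `η_s(F; x, n) = limsup_{|I|→∞} |F ∩ B_{p^{-n}}(x) ∩ I| / |B_{p^{-n}}(x) ∩ I|^s`. -/
def etaN (s : ℝ) (F : Set ℤ_[p]) (x : ℤ_[p]) (n : ℕ) : ℝ≥0∞ :=
  relCount s (proj p F) (proj p (pball p x n))

/-- The `s`-counting local measure `η_s(F; x) = limsup_{n→∞} η_s(F; x, n)`. -/
def eta (s : ℝ) (F : Set ℤ_[p]) (x : ℤ_[p]) : ℝ≥0∞ :=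
  Filter.atTop.limsup fun n : ℕ => etaN p s F x n

/-- `N_{p^{-n}}(F)`: minimal number of closed balls of radius `p^{-n}` covering `F`. -/
def coverNumber (F : Set ℤ_[p]) (n : ℕ) : ℕ :=
  sInf {k : ℕ | ∃ t : Finset ℤ_[p], t.card = k ∧
    F ⊆ ⋃ x ∈ t, Metric.closedBall x ((p : ℝ) ^ (-(n : ℤ)))}

/-- Upper box-counting dimension of `F ⊆ ℤ_p`. -/
def upperBoxDim (F : Set ℤ_[p]) : ℝ :=
  Filter.atTop.limsup fun n : ℕ => Real.log (coverNumber p F n) / (n * Real.log p)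

/-- Lower box-counting dimension of `F ⊆ ℤ_p`. -/
def lowerBoxDim (F : Set ℤ_[p]) : ℝ :=
  Filter.atTop.liminf fun n : ℕ => Real.log (coverNumber p F n) / (n * Real.log p)

/-- Maximal number of points of `E` in an integer interval of length `n`. -/
def maxCnt (E : Set ℤ) (n : ℕ) : ℕ := sSup {k : ℕ | ∃ M : ℤ, cnt E M n = k}

/-- The counting dimension `D(E) = limsup_{|I|→∞} log |E ∩ I| / log |I|`. -/
def countingDim (E : Set ℤ) : ℝ :=
  Filter.atTop.limsup fun n : ℕ => Real.log (maxCnt E n) / Real.log n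

/-- `θ̲*^s(F) = limsup_n min_{a ∈ G_n} ℋ^s(F ∩ B_{p^{-n}}(a)) / p^{-ns}`, where the
minimum runs over residues `a` whose ball `B_{p^{-n}}(a)` meets `F`. -/
def thetaStar (s : ℝ) (F : Set ℤ_[p]) : ℝ≥0∞ :=
  Filter.atTop.limsup fun n : ℕ =>
    ⨅ (a : ℤ) (_ : (pball p (a : ℤ_[p]) n ∩ F).Nonempty),
      μH[s] (F ∩ pball p (a : ℤ_[p]) n) / (p : ℝ≥0∞) ^ (-((n : ℝ) * s))

/-- A finite arithmetic progression in `ℤ` with common difference `d`. -/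
def IsAPWithDiff (A : Set ℤ) (d : ℤ) : Prop :=
  ∃ a : ℤ, ∃ L : ℕ, A = (fun i : ℕ => a + d * (i : ℤ)) '' {i : ℕ | i < L}

-- aux lemmas
lemma Ioc_ncard (M : ℤ) (n : ℕ) : (Set.Ioc M (M + n)).ncard = n := by
  rw [← Finset.coe_Ioc, Set.ncard_coe_finset, Int.card_Ioc]
  omega

lemma cnt_le_length (E : Set ℤ) (M : ℤ) (n : ℕ) : cnt E M n ≤ n := by
  have : (E ∩ Set.Ioc M (M + n)).ncard ≤ (Set.Ioc M (M + n)).ncard :=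
    Set.ncard_le_ncard inter_subset_right (Set.finite_Ioc _ _)
  simpa [cnt, Ioc_ncard] using this

lemma cnt_mono {E E' : Set ℤ} (h : E ⊆ E') (M : ℤ) (n : ℕ) : cnt E M n ≤ cnt E' M n :=
  Set.ncard_le_ncard (Set.inter_subset_inter_left _ h)
    ((Set.finite_Ioc _ _).inter_of_right _)

lemma maxCnt_le_length (E : Set ℤ) (n : ℕ) : maxCnt E n ≤ n := by
  refine csSup_le ⟨cnt E 0 n, 0, rfl⟩ ?_
  rintro k ⟨M, rfl⟩; exact cnt_le_length E M n

lemma cnt_le_maxCnt (E : Set ℤ) (M : ℤ) (n : ℕ) : cnt E M n ≤ maxCnt E n := by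
  refine le_csSup ⟨n, ?_⟩ ⟨M, rfl⟩
  rintro k ⟨M', rfl⟩; exact cnt_le_length E M' n

lemma maxCnt_mono {E E' : Set ℤ} (h : E ⊆ E') (n : ℕ) : maxCnt E n ≤ maxCnt E' n := by
  refine csSup_le ⟨cnt E 0 n, 0, rfl⟩ ?_
  rintro k ⟨M, rfl⟩
  exact (cnt_mono h M n).trans (cnt_le_maxCnt E' M n)

lemma log_nat_mono {a b : ℕ} (h : a ≤ b) : Real.log a ≤ Real.log b := by
  rcases Nat.eq_zero_or_pos a with rfl | ha
  · simpa using Real.log_natCast_nonneg b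
  · exact Real.log_le_log (by exact_mod_cast ha) (by exact_mod_cast h)

lemma exists_cover_card_le (F : Set ℤ_[p]) (m : ℕ) :
    ∃ t : Finset ℤ_[p], t.card ≤ p ^ m ∧
      F ⊆ ⋃ x ∈ t, Metric.closedBall x ((p : ℝ) ^ (-(m : ℤ))) := by
  classical
  refine ⟨(Finset.range (p ^ m)).image (fun i : ℕ => (i : ℤ_[p])),
    (Finset.card_image_le).trans (le_of_eq (Finset.card_range _)), ?_⟩
  intro x _
  refine Set.mem_biUnion (Finset.mem_image.2 ⟨x.appr m, Finset.mem_range.2 (x.appr_lt m), rfl⟩) ?_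
  rw [Metric.mem_closedBall, dist_eq_norm]
  exact (PadicInt.norm_le_pow_iff_mem_span_pow _ m).2 (x.appr_spec m)

lemma coverSet_nonempty (F : Set ℤ_[p]) (m : ℕ) :
    {k : ℕ | ∃ t : Finset ℤ_[p], t.card = k ∧
      F ⊆ ⋃ x ∈ t, Metric.closedBall x ((p : ℝ) ^ (-(m : ℤ)))}.Nonempty := by
  obtain ⟨t, -, ht⟩ := exists_cover_card_le p F m
  have hmem : t.card ∈ {k : ℕ | ∃ t : Finset ℤ_[p], t.card = k ∧
      F ⊆ ⋃ x ∈ t, Metric.closedBall x ((p : ℝ) ^ (-(m : ℤ)))} := ⟨t, rfl, ht⟩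
  exact Set.nonempty_of_mem hmem

lemma coverNumber_le_pow (F : Set ℤ_[p]) (m : ℕ) : coverNumber p F m ≤ p ^ m := by
  obtain ⟨t, hc, ht⟩ := exists_cover_card_le p F m
  have hmem : t.card ∈ {k : ℕ | ∃ t : Finset ℤ_[p], t.card = k ∧
      F ⊆ ⋃ x ∈ t, Metric.closedBall x ((p : ℝ) ^ (-(m : ℤ)))} := ⟨t, rfl, ht⟩
  exact (Nat.sInf_le hmem).trans hc

lemma maxCnt_le_coverNumber (F : Set ℤ_[p]) {n m : ℕ} (h : n ≤ p ^ m) :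
    maxCnt (proj p (closure F)) n ≤ coverNumber p F m := by
  have hmem' := Nat.sInf_mem (coverSet_nonempty p F m)
  simp only [Set.mem_setOf_eq] at hmem'
  obtain ⟨t, hcard, hcover⟩ := hmem'
  have hclosed : closure F ⊆ ⋃ x ∈ t, Metric.closedBall x ((p : ℝ) ^ (-(m : ℤ))) :=
    closure_minimal hcover (isClosed_biUnion_finset fun i _ => Metric.isClosed_closedBall)
  have hcn : coverNumber p F m = t.card := hcard.symm
  rw [hcn]
  refine csSup_le ⟨cnt _ 0 n, 0, rfl⟩ ?_
  rintro k ⟨M, rfl⟩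
  -- choose for each j a center
  classical
  have hmem : ∀ j ∈ proj p (closure F) ∩ Set.Ioc M (M + n),
      ∃ x, x ∈ t ∧ (j : ℤ_[p]) ∈ Metric.closedBall x ((p : ℝ) ^ (-(m : ℤ))) := by
    intro j hj
    have := hclosed hj.1
    simpa using this
  choose f hf hfb using hmem
  have : cnt (proj p (closure F)) M n ≤ (↑t : Set ℤ_[p]).ncard := by
    refine Set.ncard_le_ncard_of_injOn (fun j => if hj : j ∈ proj p (closure F) ∩ Set.Ioc M (M + n) then f j hj else 0) ?_ ?_ t.finite_toSet
    · intro j hj; simp only [dif_pos hj]; exact hf j hj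
    · intro j hj j' hj' hEq
      simp only [dif_pos hj, dif_pos hj'] at hEq
      have h1 := hfb j hj
      have h2 := hfb j' hj'
      rw [hEq] at h1
      rw [Metric.mem_closedBall, dist_eq_norm] at h1 h2
      have hnorm : ‖((j - j' : ℤ) : ℤ_[p])‖ ≤ (p : ℝ) ^ (-(m : ℤ)) := by
        push_cast
        have : ((j : ℤ_[p]) - j') = ((j : ℤ_[p]) - f j' hj') + ((f j' hj') - j') := by ring
        rw [this]
        exact (PadicInt.nonarchimedean _ _).trans (max_le h1 (by rwa [norm_sub_rev] at h2))
      have hdvd : ((p : ℤ) ^ m) ∣ (j - j') := PadicInt.norm_int_le_pow_iff_dvd.mp hnorm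
      by_contra hne
      have habs : (0 : ℤ) < |j - j'| := by
        have : j - j' ≠ 0 := sub_ne_zero.2 hne
        exact abs_pos.2 this
      have hle : ((p : ℤ) ^ m) ≤ |j - j'| := Int.le_of_dvd habs ((dvd_abs _ _).2 hdvd)
      have hlt : |j - j'| < (n : ℤ) := by
        rw [abs_lt]
        obtain ⟨-, h1j⟩ := hj
        obtain ⟨-, h2j⟩ := hj'
        simp only [Set.mem_Ioc] at h1j h2j
        omega
      have hnm : (n : ℤ) ≤ (p : ℤ) ^ m := by exact_mod_cast h
      omega
  rwa [Set.ncard_coe_finset] at this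


lemma ratio_le_one (E : Set ℤ) (n : ℕ) : Real.log (maxCnt E n) / Real.log n ≤ 1 := by
  rcases le_or_gt (Real.log n) 0 with h0 | h0
  · have hz : Real.log n = 0 := le_antisymm h0 (Real.log_natCast_nonneg n)
    rw [hz, div_zero]; norm_num
  · rw [div_le_one h0]
    exact log_nat_mono (maxCnt_le_length E n)

lemma div_le_div_of_nonneg_right' {a b c : ℝ} (hc : 0 < c) (h : a ≤ b) : a / c ≤ b / c := by
  gcongr

lemma countingDim_mono {E E' : Set ℤ} (h : E ⊆ E') : countingDim E ≤ countingDim E' := by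
  refine limsup_le_limsup (Filter.Eventually.of_forall fun n => ?_) ?_ ?_
  · show Real.log (maxCnt E n) / Real.log n ≤ Real.log (maxCnt E' n) / Real.log n
    rcases eq_or_lt_of_le (Real.log_natCast_nonneg n) with h0 | h0
    · rw [← h0]; simp
    · exact div_le_div_of_nonneg_right' h0 (log_nat_mono (maxCnt_mono h n))
  · exact isCoboundedUnder_le_of_le _ fun n =>
      div_nonneg (Real.log_natCast_nonneg _) (Real.log_natCast_nonneg _)
  · exact Filter.isBoundedUnder_of ⟨1, fun n => ratio_le_one E' n⟩

lemma main_ineq (F : Set ℤ_[p]) :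
    countingDim (proj p (closure F)) ≤ upperBoxDim p F := by
  have hp : 1 < p := (Fact.out : p.Prime).one_lt
  have hp1 : (1:ℝ) < p := by exact_mod_cast hp
  have hlogp : 0 < Real.log p := Real.log_pos hp1
  set E := proj p (closure F) with hE
  set a : ℕ → ℝ := fun n => Real.log (maxCnt E n) / Real.log n with ha
  set b : ℕ → ℝ := fun m => Real.log (coverNumber p F m) / (m * Real.log p) with hb
  have ha0 : ∀ n, 0 ≤ a n := fun n =>
    div_nonneg (Real.log_natCast_nonneg _) (Real.log_natCast_nonneg _)
  have hb0 : ∀ m, 0 ≤ b m := fun m =>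
    div_nonneg (Real.log_natCast_nonneg _) (mul_nonneg (Nat.cast_nonneg _) hlogp.le)
  have hb1 : ∀ m, b m ≤ 1 := by
    intro m
    rcases Nat.eq_zero_or_pos m with rfl | hm
    · simp [hb]
    · have hden : 0 < (m:ℝ) * Real.log p := mul_pos (by exact_mod_cast hm) hlogp
      rw [hb]
      rw [div_le_one hden]
      calc Real.log (coverNumber p F m) ≤ Real.log ((p ^ m : ℕ)) :=
            log_nat_mono (coverNumber_le_pow p F m)
        _ = (m:ℝ) * Real.log p := by rw [Nat.cast_pow, Real.log_pow]
  have hbdd_b : Filter.atTop.IsBoundedUnder (· ≤ ·) b :=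
    Filter.isBoundedUnder_of ⟨1, hb1⟩
  set B := Filter.atTop.limsup b with hB
  have hub : upperBoxDim p F = B := rfl
  have hcd : countingDim E = Filter.atTop.limsup a := rfl
  rw [hub, hcd]
  have hB0 : 0 ≤ B := le_limsup_of_frequently_le (Filter.Frequently.of_forall hb0) hbdd_b
  refine le_of_forall_pos_le_add ?_
  intro δ hδ
  have hlt : ∀ᶠ m in atTop, b m < B + δ :=
    eventually_lt_of_limsup_lt (lt_add_of_pos_right _ hδ) hbdd_b
  obtain ⟨K, hK⟩ := Filter.eventually_atTop.mp hlt
  set g : ℕ → ℝ := fun n => (B + δ) * (1 + Real.log p / Real.log n) with hg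
  have h4 : 0 ≤ B + δ := by linarith
  have hev : ∀ᶠ n in atTop, a n ≤ g n := by
    filter_upwards [Filter.eventually_ge_atTop (max 2 (p ^ K))] with n hn
    have hn2 : 2 ≤ n := le_trans (le_max_left _ _) hn
    have hnK : p ^ K ≤ n := le_trans (le_max_right _ _) hn
    set m := Nat.clog p n with hm
    have hmK : K ≤ m := by
      have := Nat.clog_mono_right p hnK
      rwa [Nat.clog_pow _ _ hp] at this
    have hm1 : 1 ≤ m := Nat.clog_pos hp hn2
    have hnpm : n ≤ p ^ m := Nat.le_pow_clog hp n
    have hlow : p ^ (m - 1) ≤ n := (Nat.pow_pred_clog_lt_self hp (by omega)).le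
    have hlogn : 0 < Real.log n := Real.log_pos (by exact_mod_cast hn2)
    have h1 : Real.log (maxCnt E n) ≤ Real.log (coverNumber p F m) :=
      log_nat_mono (maxCnt_le_coverNumber p F hnpm)
    have h2 : Real.log (coverNumber p F m) ≤ (B + δ) * ((m:ℝ) * Real.log p) := by
      have hKm := (hK m hmK).le
      rw [hb] at hKm
      have hden : 0 < (m:ℝ) * Real.log p := mul_pos (by exact_mod_cast hm1) hlogp
      exact (div_le_iff₀ hden).mp hKm
    have h3 : (m:ℝ) * Real.log p ≤ Real.log n + Real.log p := by
      have hlog1 : Real.log ((p ^ (m - 1) : ℕ)) ≤ Real.log n := log_nat_mono hlow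
      rw [Nat.cast_pow, Real.log_pow] at hlog1
      have hcast : ((m - 1 : ℕ) : ℝ) = (m : ℝ) - 1 := by
        rw [Nat.cast_sub hm1]; norm_num
      rw [hcast] at hlog1
      linarith
    have h5 : Real.log (maxCnt E n) ≤ (B + δ) * (Real.log n + Real.log p) :=
      h1.trans (h2.trans (mul_le_mul_of_nonneg_left h3 h4))
    show Real.log (maxCnt E n) / Real.log n ≤ (B + δ) * (1 + Real.log p / Real.log n)
    rw [div_le_iff₀ hlogn]
    have hfield : (B + δ) * (1 + Real.log p / Real.log n) * Real.log n
        = (B + δ) * (Real.log n + Real.log p) := by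
      field_simp
    rw [hfield]
    exact h5
  have hcobdd_a : Filter.atTop.IsCoboundedUnder (· ≤ ·) a :=
    isCoboundedUnder_le_of_le _ ha0
  have htend : Filter.Tendsto g atTop (nhds (B + δ)) := by
    have h0 : Filter.Tendsto (fun n : ℕ => Real.log p / Real.log n) atTop (nhds 0) := by
      apply Filter.Tendsto.div_atTop tendsto_const_nhds
      exact Real.tendsto_log_atTop.comp tendsto_natCast_atTop_atTop
    have h1' : Filter.Tendsto (fun n : ℕ => 1 + Real.log p / Real.log n) atTop (nhds (1 + 0)) :=
      tendsto_const_nhds.add h0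
    have h2' := (tendsto_const_nhds (x := B + δ) (f := atTop)).mul h1'
    simpa using h2'
  have hbdd_g : Filter.atTop.IsBoundedUnder (· ≤ ·) g := htend.isBoundedUnder_le
  have hle : Filter.atTop.limsup a ≤ Filter.atTop.limsup g :=
    limsup_le_limsup hev hcobdd_a hbdd_g
  rwa [htend.limsup_eq] at hle


/-- Theorem E: for any `F ⊆ ℤ_p`, `D(Π_p(closure F)) ≤ BD(F)`; in particular
`D(E) ≤ BD(E)` for every `E ⊆ ℤ`. -/
theorem countingDim_le_upperBoxDim :
    (∀ F : Set ℤ_[p], countingDim (proj p (closure F)) ≤ upperBoxDim p F) ∧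
    (∀ E : Set ℤ, countingDim E ≤ upperBoxDim p ((fun m : ℤ => (m : ℤ_[p])) '' E)) := by
  constructor
  · exact main_ineq p
  · intro E
    have hsub : E ⊆ proj p (closure ((fun m : ℤ => (m : ℤ_[p])) '' E)) := fun m hm =>
      subset_closure ⟨m, hm, rfl⟩
    exact (countingDim_mono hsub).trans (main_ineq p _)

end
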